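/- arXiv:2511.17772 — 2 statements merged into one kernel-verified Lean document; each statement's English description precedes it below -/
import Mathlib

section
/- Let (X, 𝒜, μ) be a probability space, f : X → X measure-preserving and ergodic, g ∈ L¹(μ), and w : [0,1] → ℝ continuous, nonnegative, with ∫₀¹ w = 1 and w not identically zero. Then for μ-almost every x, the weighted Birkhoff average WB_N(g)(x) = (1/α_N) ∑_{n=0}^{N-1} w(n/N) g(fⁿ(x)) converges to ∫ g dμ as N → ∞, where α_N = ∑_{n=0}^{N-1} w(n/N). -/
/-!
Write `a n = g (fⁿ x)`. Birkhoff's theorem for `g` and `|g|` makes the Cesàro means of `a` converge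
to `∫ g` and those of `|a|` bounded; the rest is deterministic. Replacing `w` by the step function
`t ↦ w (⌊t k⌋ / k)` costs at most `ε` times the Cesàro mean of `|a - L|`, and against a
Cesàro-null sequence the step-weighted averages tend to `0` by Abel summation, because the step
weights `w (⌊n k / N⌋ / k)`, `n ≤ N`, have total variation bounded independently of `N`. Together
with Riemann sums for `w` this gives `(1/N) ∑ w (n/N) a n → (∫ w) L`; dividing by the Riemann sums
`(1/N) ∑ w (n/N) → ∫ w = 1` proves the theorem.

Birkhoff's theorem is derived from Garsia's maximal ergodic inequality: if `∫ h < 0`, the set where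
the Birkhoff sums of `h` are unbounded above is invariant, hence null or conull, and conull would
force `∫ h ≥ 0`.
-/

open Filter MeasureTheory Finset Topology

lemma abs_sum_range_mul_le_of_abs_partialSum_le (v b : ℕ → ℝ) (N : ℕ) {C : ℝ}
    (hC : ∀ m ≤ N, |∑ i ∈ range m, b i| ≤ C) :
    |∑ n ∈ range N, v n * b n| ≤ C * (|v N| + ∑ n ∈ range N, |v (n + 1) - v n|) := by
  set B : ℕ → ℝ := fun m => ∑ i ∈ range m, b i
  have abel : ∑ n ∈ range N, v n * b n
      = v N * B N - ∑ n ∈ range N, (v (n + 1) - v n) * B (n + 1) := by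
    induction N with
    | zero => simp [B]
    | succ N ih =>
      simp only [sum_range_succ, B] at ih ⊢
      rw [ih fun m hm => hC m (by omega)]
      ring
  rw [abel]
  calc |v N * B N - ∑ n ∈ range N, (v (n + 1) - v n) * B (n + 1)|
      ≤ |v N| * |B N| + ∑ n ∈ range N, |v (n + 1) - v n| * |B (n + 1)| := by
        refine (abs_sub _ _).trans (add_le_add (abs_mul _ _).le ?_)
        exact (abs_sum_le_sum_abs _ _).trans_eq (sum_congr rfl fun n _ => abs_mul _ _)
    _ ≤ |v N| * C + ∑ n ∈ range N, |v (n + 1) - v n| * C := by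
        gcongr with n hn
        · exact hC N le_rfl
        · exact hC (n + 1) (mem_range.1 hn)
    _ = _ := by rw [← sum_mul]; ring

lemma sum_range_abs_sub_comp_le {m : ℕ → ℕ} (hm : Monotone m) (u : ℕ → ℝ) (N : ℕ) :
    ∑ n ∈ range N, |u (m (n + 1)) - u (m n)| ≤ ∑ j ∈ Ico (m 0) (m N), |u (j + 1) - u j| := by
  induction N with
  | zero => simp
  | succ N ih =>
    have hstep : |u (m (N + 1)) - u (m N)| ≤ ∑ j ∈ Ico (m N) (m (N + 1)), |u (j + 1) - u j| := by
      rw [← sum_Ico_sub u (hm N.le_succ)]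
      exact abs_sum_le_sum_abs _ _
    rw [sum_range_succ, ← sum_Ico_consecutive _ (hm (Nat.zero_le N)) (hm N.le_succ)]
    exact add_le_add ih hstep

lemma eventually_abs_partialSum_le_of_tendsto_zero {b : ℕ → ℝ}
    (hb : Tendsto (fun N : ℕ => (∑ n ∈ range N, b n) / N) atTop (𝓝 0)) {ε : ℝ} (hε : 0 < ε) :
    ∀ᶠ N : ℕ in atTop, ∀ m ≤ N, |∑ n ∈ range m, b n| ≤ ε * N := by
  obtain ⟨m₀, hm₀⟩ := Metric.tendsto_atTop.1 hb ε hε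
  have hlarge : ∀ m ≥ m₀, |∑ n ∈ range m, b n| ≤ ε * m := by
    intro m hm
    rcases m.eq_zero_or_pos with rfl | hpos
    · simp
    have hm' : (0 : ℝ) < m := by exact_mod_cast hpos
    have := hm₀ m hm
    rw [Real.dist_eq, sub_zero, abs_div, Nat.abs_cast, div_lt_iff₀ hm'] at this
    exact this.le
  set C := ∑ m ∈ range m₀, |∑ n ∈ range m, b n|
  filter_upwards [tendsto_natCast_atTop_atTop.eventually_ge_atTop (C / ε)] with N hN m hmN
  rcases lt_or_ge m m₀ with hm | hm
  · calc |∑ n ∈ range m, b n| ≤ C :=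
          single_le_sum (f := fun m => |∑ n ∈ range m, b n|) (fun _ _ => abs_nonneg _)
            (mem_range.2 hm)
      _ ≤ ε * N := by rwa [div_le_iff₀' hε] at hN
  · exact (hlarge m hm).trans (by gcongr)

lemma tendsto_sum_step_mul_div_zero (u : ℕ → ℝ) (k : ℕ) {b : ℕ → ℝ}
    (hb : Tendsto (fun N : ℕ => (∑ n ∈ range N, b n) / N) atTop (𝓝 0)) :
    Tendsto (fun N : ℕ => (∑ n ∈ range N, u ⌊(n : ℝ) / N * k⌋₊ * b n) / N) atTop (𝓝 0) := by
  set V := ∑ j ∈ range (k + 1), |u j| + ∑ j ∈ range k, |u (j + 1) - u j|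
  have hvar : ∀ N : ℕ, |u ⌊(N : ℝ) / N * k⌋₊| + ∑ n ∈ range N,
      |u ⌊((n + 1 : ℕ) : ℝ) / N * k⌋₊ - u ⌊(n : ℝ) / N * k⌋₊| ≤ V := by
    intro N
    set m : ℕ → ℕ := fun n => ⌊(n : ℝ) / N * k⌋₊
    have hm : Monotone m := fun i j hij => Nat.floor_mono (by gcongr)
    have hmN : m N ≤ k := Nat.floor_le_of_le (mul_le_of_le_one_left (by positivity)
      (div_le_one_of_le₀ le_rfl (by positivity)))
    refine add_le_add ?_ ?_
    · exact single_le_sum (f := fun j => |u j|) (fun _ _ => abs_nonneg _)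
        (mem_range.2 (Nat.lt_succ_of_le hmN))
    · refine (sum_range_abs_sub_comp_le hm u N).trans ?_
      simp only [m, Nat.cast_zero, zero_div, zero_mul, Nat.floor_zero, ← range_eq_Ico]
      exact sum_le_sum_of_subset_of_nonneg (range_subset_range.2 hmN) fun _ _ _ => abs_nonneg _
  rw [Metric.tendsto_nhds]
  intro ε hε
  have hε' : 0 < ε / (V + 1) := by positivity
  filter_upwards [eventually_abs_partialSum_le_of_tendsto_zero hb hε', eventually_gt_atTop 0]
    with N hN hN0
  have hNpos : (0 : ℝ) < N := by exact_mod_cast hN0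
  have hsum := abs_sum_range_mul_le_of_abs_partialSum_le (fun n => u ⌊(n : ℝ) / N * k⌋₊) b N hN
  rw [Real.dist_eq, sub_zero, abs_div, Nat.abs_cast, div_lt_iff₀ hNpos]
  calc _ ≤ ε / (V + 1) * N * V := hsum.trans (by gcongr; exact_mod_cast hvar N)
    _ < ε * N := by
      rw [div_mul_eq_mul_div, div_mul_eq_mul_div, div_lt_iff₀ (by positivity)]
      nlinarith [mul_pos hε hNpos]

lemma ContinuousOn.exists_forall_abs_sub_natFloor_le {w : ℝ → ℝ}
    (hw : ContinuousOn w (Set.Icc 0 1)) {ε : ℝ} (hε : 0 < ε) :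
    ∃ k : ℕ, ∀ t ∈ Set.Icc (0 : ℝ) 1, |w t - w (⌊t * k⌋₊ / k)| ≤ ε := by
  obtain ⟨δ, hδ, hwδ⟩ := Metric.uniformContinuousOn_iff.1
    (isCompact_Icc.uniformContinuousOn_of_continuous hw) ε hε
  obtain ⟨k, hk⟩ := exists_nat_gt (1 / δ)
  have hk0 : (0 : ℝ) < k := (one_div_pos.2 hδ).trans hk
  refine ⟨k, fun t ht => ?_⟩
  have hle : (⌊t * k⌋₊ : ℝ) / k ≤ t := by
    rw [div_le_iff₀ hk0]; exact Nat.floor_le (mul_nonneg ht.1 hk0.le)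
  have hgt : t - 1 / k < (⌊t * k⌋₊ : ℝ) / k := by
    rw [sub_lt_iff_lt_add, ← add_div, lt_div_iff₀ hk0]; exact Nat.lt_floor_add_one _
  have hdist : dist t ((⌊t * k⌋₊ : ℝ) / k) < δ := by
    rw [Real.dist_eq, abs_of_nonneg (sub_nonneg.2 hle)]
    have : 1 / (k : ℝ) < δ := by rwa [div_lt_iff₀ hk0, mul_comm, ← div_lt_iff₀ hδ]
    linarith
  exact (hwδ t ht _ ⟨by positivity, hle.trans ht.2⟩ hdist).le

lemma abs_intervalIntegral_sub_mul_le {w : ℝ → ℝ} {a b ε : ℝ} (hab : a ≤ b)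
    (hw : IntervalIntegrable w volume a b) (h : ∀ x ∈ Set.Icc a b, |w x - w a| ≤ ε) :
    |(∫ x in a..b, w x) - (b - a) * w a| ≤ ε * (b - a) := by
  have hsub : (∫ x in a..b, w x) - (b - a) * w a = ∫ x in a..b, (w x - w a) := by
    rw [intervalIntegral.integral_sub hw intervalIntegrable_const, intervalIntegral.integral_const,
      smul_eq_mul]
  rw [hsub, ← abs_of_nonneg (sub_nonneg.2 hab)]
  exact intervalIntegral.norm_integral_le_of_norm_le_const (f := fun x => w x - w a) fun x hx =>
    h x (Set.Ioc_subset_Icc_self (Set.uIoc_of_le hab ▸ hx))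

lemma ContinuousOn.tendsto_sum_range_div {w : ℝ → ℝ} (hw : ContinuousOn w (Set.Icc 0 1)) :
    Tendsto (fun N : ℕ => (∑ n ∈ range N, w (n / N)) / N) atTop
      (𝓝 (∫ x in (0 : ℝ)..1, w x)) := by
  rw [Metric.tendsto_atTop]
  intro ε hε
  obtain ⟨δ, hδ, hwδ⟩ := Metric.uniformContinuousOn_iff.1
    (isCompact_Icc.uniformContinuousOn_of_continuous hw) (ε / 2) (half_pos hε)
  obtain ⟨N₀, hN₀⟩ := exists_nat_gt (1 / δ)
  refine ⟨N₀, fun N hN => ?_⟩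
  have hNpos : (0 : ℝ) < N := (one_div_pos.2 hδ).trans (hN₀.trans_le (by exact_mod_cast hN))
  have hmesh : 1 / (N : ℝ) < δ := by
    rw [div_lt_iff₀ hNpos, mul_comm, ← div_lt_iff₀ hδ]
    exact hN₀.trans_le (by exact_mod_cast hN)
  set x : ℕ → ℝ := fun n => n / N
  have hx_succ : ∀ n, x (n + 1) - x n = 1 / N := fun n => by simp only [x]; push_cast; ring
  have hx_mem : ∀ n < N, Set.Icc (x n) (x (n + 1)) ⊆ Set.Icc 0 1 := fun n hn =>
    Set.Icc_subset_Icc (by positivity)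
      (div_le_one_of_le₀ (by exact_mod_cast hn) hNpos.le)
  have hint : ∀ n < N, IntervalIntegrable w volume (x n) (x (n + 1)) := fun n hn =>
    (hw.mono (hx_mem n hn)).intervalIntegrable_of_Icc (by linarith [hx_succ n, one_div_pos.2 hNpos])
  have hpiece : ∀ n < N, |(∫ t in x n..x (n + 1), w t) - 1 / N * w (x n)| ≤ ε / 2 * (1 / N) := by
    intro n hn
    have hle : x n ≤ x (n + 1) := by linarith [hx_succ n, one_div_pos.2 hNpos]
    rw [← hx_succ n]
    refine abs_intervalIntegral_sub_mul_le hle (hint n hn) fun t ht => ?_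
    refine (hwδ t (hx_mem n hn ht) (x n) (hx_mem n hn ⟨le_rfl, hle⟩) ?_).le
    rw [Real.dist_eq, abs_of_nonneg (by linarith [ht.1])]
    linarith [ht.2, hx_succ n]
  have hsplit : ∫ t in (0 : ℝ)..1, w t = ∑ n ∈ range N, ∫ t in x n..x (n + 1), w t := by
    rw [intervalIntegral.sum_integral_adjacent_intervals hint]
    simp [x, hNpos.ne']
  rw [Real.dist_eq, hsplit, sum_div, ← sum_sub_distrib]
  calc _ ≤ ∑ n ∈ range N, |(∫ t in x n..x (n + 1), w t) - 1 / N * w (x n)| := by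
        refine (abs_sum_le_sum_abs _ _).trans_eq (sum_congr rfl fun n _ => ?_)
        rw [abs_sub_comm, div_eq_inv_mul, one_div]
    _ ≤ ∑ _n ∈ range N, ε / 2 * (1 / N) := sum_le_sum fun n hn => hpiece n (mem_range.1 hn)
    _ < ε := by rw [sum_const, card_range, nsmul_eq_mul]; field_simp; linarith

lemma tendsto_sum_mul_div_zero_of_tendsto_zero {w : ℝ → ℝ} (hw : ContinuousOn w (Set.Icc 0 1))
    {b : ℕ → ℝ} (hb : Tendsto (fun N : ℕ => (∑ n ∈ range N, b n) / N) atTop (𝓝 0))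
    (hb_abs : IsBoundedUnder (· ≤ ·) atTop fun N : ℕ => (∑ n ∈ range N, |b n|) / N) :
    Tendsto (fun N : ℕ => (∑ n ∈ range N, w (n / N) * b n) / N) atTop (𝓝 0) := by
  obtain ⟨M, hM⟩ := hb_abs
  rw [eventually_map] at hM
  rw [Metric.tendsto_nhds]
  intro ε hε
  set M' := max M 0 + 1
  have hM' : 0 < M' := by positivity
  obtain ⟨k, hk⟩ := hw.exists_forall_abs_sub_natFloor_le (div_pos (half_pos hε) hM')
  have hstep := Metric.tendsto_nhds.1 (tendsto_sum_step_mul_div_zero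
    (fun j => w (j / k)) k hb) (ε / 2) (half_pos hε)
  filter_upwards [hM, hstep, eventually_gt_atTop 0] with N hMN hstepN hN0
  have hNpos : (0 : ℝ) < N := by exact_mod_cast hN0
  have happrox : |∑ n ∈ range N, w (n / N) * b n
      - ∑ n ∈ range N, w (⌊(n : ℝ) / N * k⌋₊ / k) * b n| ≤ ε / 2 / M' * ∑ n ∈ range N, |b n| := by
    rw [← sum_sub_distrib, mul_sum]
    refine (abs_sum_le_sum_abs _ _).trans (sum_le_sum fun n hn => ?_)
    rw [← sub_mul, abs_mul]
    gcongr
    exact hk _ ⟨by positivity, div_le_one_of_le₀ (by exact_mod_cast (mem_range.1 hn).le) hNpos.le⟩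
  have hclose : |(∑ n ∈ range N, w (n / N) * b n) / N
      - (∑ n ∈ range N, w (⌊(n : ℝ) / N * k⌋₊ / k) * b n) / N| ≤ ε / 2 / M' * M := by
    rw [← sub_div, abs_div, Nat.abs_cast, div_le_iff₀ hNpos, mul_assoc]
    refine happrox.trans (by gcongr; rwa [← div_le_iff₀ hNpos])
  have hsmall : ε / 2 / M' * M < ε / 2 := by
    rw [div_mul_eq_mul_div, div_lt_iff₀ hM']
    nlinarith [le_max_left M 0]
  rw [Real.dist_eq, sub_zero] at hstepN ⊢
  linarith [abs_sub_abs_le_abs_sub ((∑ n ∈ range N, w (n / N) * b n) / N)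
    ((∑ n ∈ range N, w (⌊(n : ℝ) / N * k⌋₊ / k) * b n) / N)]

theorem tendsto_sum_mul_div_of_tendsto {w : ℝ → ℝ} (hw : ContinuousOn w (Set.Icc 0 1))
    {a : ℕ → ℝ} {L : ℝ} (ha : Tendsto (fun N : ℕ => (∑ n ∈ range N, a n) / N) atTop (𝓝 L))
    (ha_abs : IsBoundedUnder (· ≤ ·) atTop fun N : ℕ => (∑ n ∈ range N, |a n|) / N) :
    Tendsto (fun N : ℕ => (∑ n ∈ range N, w (n / N) * a n) / N) atTop
      (𝓝 ((∫ x in (0 : ℝ)..1, w x) * L)) := by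
  set b : ℕ → ℝ := fun n => a n - L
  have hsum_b : ∀ N : ℕ, 0 < N → (∑ n ∈ range N, b n) / N = (∑ n ∈ range N, a n) / N - L :=
    fun N hN => by simp only [b, sum_sub_distrib, sum_const, card_range, nsmul_eq_mul]; field_simp
  have hb : Tendsto (fun N : ℕ => (∑ n ∈ range N, b n) / N) atTop (𝓝 0) := by
    rw [← sub_self L]
    exact (ha.sub_const L).congr' ((eventually_gt_atTop 0).mono fun N hN => (hsum_b N hN).symm)
  have hb_abs : IsBoundedUnder (· ≤ ·) atTop fun N : ℕ => (∑ n ∈ range N, |b n|) / N := by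
    obtain ⟨M, hM⟩ := ha_abs
    refine ⟨M + |L|, eventually_map.2 ?_⟩
    filter_upwards [eventually_map.1 hM, eventually_gt_atTop 0] with N hN hN0
    have hNpos : (0 : ℝ) < N := by exact_mod_cast hN0
    have : ∑ n ∈ range N, |b n| ≤ ∑ n ∈ range N, |a n| + N * |L| := by
      simpa [sum_add_distrib] using sum_le_sum fun n (_ : n ∈ range N) => abs_sub (a n) L
    rw [div_le_iff₀ hNpos] at hN ⊢
    linarith
  have hsplit : ∀ N : ℕ, (∑ n ∈ range N, w (n / N) * a n) / N
      = (∑ n ∈ range N, w (n / N)) / N * L + (∑ n ∈ range N, w (n / N) * b n) / N := by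
    intro N
    simp only [b, mul_sub, sum_sub_distrib, ← sum_mul]
    ring
  simpa [hsplit] using (hw.tendsto_sum_range_div.mul_const L).add
    (tendsto_sum_mul_div_zero_of_tendsto_zero hw hb hb_abs)

section Birkhoff

variable {X : Type*} {f : X → X} {h : X → ℝ}

lemma partialSups_birkhoffSum_le_max (h : X → ℝ) (n : ℕ) (x : X) :
    partialSups (birkhoffSum f h) n x ≤ max 0 (h x + partialSups (birkhoffSum f h) n (f x)) := by
  rw [Pi.partialSups_apply]
  refine partialSups_le _ _ _ fun i hi => ?_
  cases i with
  | zero => simp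
  | succ i =>
    rw [birkhoffSum_succ']
    refine le_max_of_le_right (add_le_add le_rfl ?_)
    rw [Pi.partialSups_apply]
    exact le_partialSups_of_le (fun j => birkhoffSum f h j (f x)) (by omega)

lemma bddAbove_range_birkhoffSum_comp_iff (x : X) :
    BddAbove (Set.range fun n => birkhoffSum f h n (f x)) ↔
      BddAbove (Set.range fun n => birkhoffSum f h n x) := by
  constructor
  · rintro ⟨C, hC⟩
    refine ⟨max 0 (h x + C), Set.forall_mem_range.2 fun n => ?_⟩
    cases n with
    | zero => simp
    | succ n =>
      rw [birkhoffSum_succ']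
      exact le_max_of_le_right (add_le_add le_rfl (hC (Set.mem_range_self n)))
  · rintro ⟨C, hC⟩
    refine ⟨C - h x, Set.forall_mem_range.2 fun n => ?_⟩
    have := hC (Set.mem_range_self (n + 1))
    rw [birkhoffSum_succ'] at this
    linarith

variable [MeasurableSpace X] {μ : Measure X}

lemma Measurable.birkhoffSum {M : Type*} [AddCommMonoid M] [MeasurableSpace M]
    [MeasurableAdd₂ M] {φ : X → M} (hf : Measurable f) (hφ : Measurable φ) (n : ℕ) :
    Measurable (birkhoffSum f φ n) :=
  Finset.measurable_sum _ fun i _ => hφ.comp (hf.iterate i)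

lemma MeasureTheory.Integrable.birkhoffSum {E : Type*} [NormedAddCommGroup E] {φ : X → E}
    (hφ : Integrable φ μ) (hf : MeasurePreserving f μ μ) (n : ℕ) :
    Integrable (birkhoffSum f φ n) μ :=
  integrable_finsetSum _ fun i _ => (hf.iterate i).integrable_comp_of_integrable hφ

lemma Measurable.partialSups {M : Type*} [MeasurableSpace M] [SemilatticeSup M]
    [MeasurableSup₂ M] {F : ℕ → X → M} (hF : ∀ n, Measurable (F n)) (n : ℕ) :
    Measurable (partialSups F n) := by
  induction n with
  | zero => simpa using hF 0
  | succ n ih => rw [partialSups_add_one]; exact ih.sup (hF (n + 1))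

lemma MeasureTheory.Integrable.partialSups {E : Type*} [NormedAddCommGroup E] [Lattice E]
    [HasSolidNorm E] [IsOrderedAddMonoid E] {F : ℕ → X → E} (hF : ∀ n, Integrable (F n) μ)
    (n : ℕ) : Integrable (partialSups F n) μ := by
  induction n with
  | zero => simpa using hF 0
  | succ n ih => rw [partialSups_add_one]; exact ih.sup (hF (n + 1))

lemma MeasureTheory.MeasurePreserving.integral_comp_of_measurable
    (hf : MeasurePreserving f μ μ) {φ : X → ℝ} (hφ : Measurable φ) :
    ∫ x, φ (f x) ∂μ = ∫ x, φ x ∂μ := by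
  rw [← integral_map hf.measurable.aemeasurable hφ.aestronglyMeasurable, hf.map_eq]

lemma MeasureTheory.MeasurePreserving.setIntegral_partialSups_birkhoffSum_pos_nonneg
    (hf : MeasurePreserving f μ μ) (hh : Measurable h) (hi : Integrable h μ) (n : ℕ) :
    0 ≤ ∫ x in {x | 0 < partialSups (birkhoffSum f h) n x}, h x ∂μ := by
  have hΦ0 : ∀ x, 0 ≤ partialSups (birkhoffSum f h) n x := fun x => by
    rw [Pi.partialSups_apply]
    exact (birkhoffSum_zero f h x).ge.trans
      (le_partialSups_of_le (fun i => birkhoffSum f h i x) (Nat.zero_le n))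
  have hdrop : ∀ x, 0 < partialSups (birkhoffSum f h) n x →
      partialSups (birkhoffSum f h) n x - partialSups (birkhoffSum f h) n (f x) ≤ h x :=
    fun x hx => by
      rcases le_max_iff.1 (partialSups_birkhoffSum_le_max h n x) with h0 | h1
      · linarith
      · linarith
  have hΦm := Measurable.partialSups (hf.measurable.birkhoffSum hh) n
  have hΦi := Integrable.partialSups (hi.birkhoffSum hf) n
  set Φ := partialSups (birkhoffSum f h) n
  set A := {x | 0 < Φ x}
  have hΦfi : Integrable (fun x => Φ (f x)) μ := hf.integrable_comp_of_integrable hΦi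
  have hA : MeasurableSet A := measurableSet_lt measurable_const hΦm
  calc (0 : ℝ) = ∫ x, Φ x ∂μ - ∫ x, Φ (f x) ∂μ := by
        rw [hf.integral_comp_of_measurable hΦm, sub_self]
    _ ≤ ∫ x in A, Φ x ∂μ - ∫ x in A, Φ (f x) ∂μ := by
        refine sub_le_sub (setIntegral_eq_integral_of_forall_compl_eq_zero fun x hx =>
          le_antisymm (not_lt.1 hx) (hΦ0 x)).ge ?_
        exact setIntegral_le_integral hΦfi (Eventually.of_forall fun x => hΦ0 (f x))
    _ = ∫ x in A, (Φ x - Φ (f x)) ∂μ := (integral_sub hΦi.integrableOn hΦfi.integrableOn).symm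
    _ ≤ ∫ x in A, h x ∂μ :=
        setIntegral_mono_on (hΦi.sub hΦfi).integrableOn hi.integrableOn hA fun x hx => hdrop x hx

theorem MeasureTheory.MeasurePreserving.setIntegral_exists_birkhoffSum_pos_nonneg
    (hf : MeasurePreserving f μ μ) (hh : Measurable h) (hi : Integrable h μ) :
    0 ≤ ∫ x in {x | ∃ n, 0 < birkhoffSum f h n x}, h x ∂μ := by
  set A : ℕ → Set X := fun n => {x | 0 < partialSups (birkhoffSum f h) n x}
  have hA_iff : ∀ n x, x ∈ A n ↔ ∃ i ≤ n, 0 < birkhoffSum f h i x := fun n x => by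
    change 0 < partialSups (birkhoffSum f h) n x ↔ _
    rw [Pi.partialSups_apply, ← not_le, partialSups_le_iff]
    push Not
    rfl
  have hunion : ⋃ n, A n = {x | ∃ n, 0 < birkhoffSum f h n x} := by
    ext x
    simp only [Set.mem_iUnion, hA_iff, Set.mem_ofPred_eq]
    exact ⟨fun ⟨_, i, _, hi⟩ => ⟨i, hi⟩, fun ⟨i, hi⟩ => ⟨i, i, le_rfl, hi⟩⟩
  have hA_mono : Monotone A := fun m n hmn x hx => by
    obtain ⟨i, hi, hpos⟩ := (hA_iff m x).1 hx
    exact (hA_iff n x).2 ⟨i, hi.trans hmn, hpos⟩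
  have hA_meas : ∀ n, MeasurableSet (A n) := fun n =>
    measurableSet_lt measurable_const (Measurable.partialSups (hf.measurable.birkhoffSum hh) n)
  rw [← hunion]
  exact ge_of_tendsto' (tendsto_setIntegral_of_monotone hA_meas hA_mono hi.integrableOn)
    (hf.setIntegral_partialSups_birkhoffSum_pos_nonneg hh hi)

theorem Ergodic.ae_bddAbove_range_birkhoffSum (hf : Ergodic f μ) (hh : Measurable h)
    (hi : Integrable h μ) (hneg : ∫ x, h x ∂μ < 0) :
    ∀ᵐ x ∂μ, BddAbove (Set.range fun n => birkhoffSum f h n x) := by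
  set E := {x | ¬BddAbove (Set.range fun n => birkhoffSum f h n x)}
  have hE : MeasurableSet E :=
    (measurableSet_bddAbove_range (hf.measurable.birkhoffSum hh)).compl
  have hfE : f ⁻¹' E = E := by
    ext x
    simp only [E, Set.mem_preimage, Set.mem_ofPred_eq, bddAbove_range_birkhoffSum_comp_iff]
  rcases hf.ae_empty_or_univ hE hfE with hE0 | hEuniv
  · exact measure_eq_zero_iff_ae_notMem.1 (ae_eq_empty.1 hE0) |>.mono fun x hx => not_not.1 hx
  · -- An unbounded sequence of sums starting at `0` takes a positive value.
    have hpos : ∀ᵐ x ∂μ, ∃ n, 0 < birkhoffSum f h n x := by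
      refine (measure_eq_zero_iff_ae_notMem.1 (ae_eq_univ.1 hEuniv)).mono fun x hx => ?_
      rw [Set.notMem_compl_iff] at hx
      by_contra! hle
      exact hx ⟨0, Set.forall_mem_range.2 hle⟩
    have := hf.toMeasurePreserving.setIntegral_exists_birkhoffSum_pos_nonneg hh hi
    rw [Measure.restrict_eq_self_of_ae_mem (s := {x | ∃ n, 0 < birkhoffSum f h n x}) hpos] at this
    exact absurd this (not_le.2 hneg)

variable [IsProbabilityMeasure μ]

lemma Ergodic.ae_eventually_birkhoffAverage_lt (hf : Ergodic f μ) (hh : Measurable h)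
    (hi : Integrable h μ) :
    ∀ᵐ x ∂μ, ∀ c, ∫ x, h x ∂μ < c → ∀ᶠ N in atTop, birkhoffAverage ℝ f h N x < c := by
  have hbdd : ∀ᵐ x ∂μ, ∀ q : ℚ, ∫ x, h x ∂μ < q →
      BddAbove (Set.range fun n => birkhoffSum f (fun y => h y - q) n x) := by
    refine ae_all_iff.2 fun q => ?_
    by_cases hq : ∫ x, h x ∂μ < q
    · refine (hf.ae_bddAbove_range_birkhoffSum (hh.sub_const _) (hi.sub (integrable_const _))
        ?_).mono fun x hx _ => hx
      rw [integral_sub hi (integrable_const _), integral_const, probReal_univ, one_smul]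
      linarith
    · exact Eventually.of_forall fun x hq' => absurd hq' hq
  filter_upwards [hbdd] with x hx c hc
  obtain ⟨q, hq, hqc⟩ := exists_rat_btwn hc
  obtain ⟨C, hC⟩ := hx q hq
  have hsum : ∀ N : ℕ, birkhoffSum f h N x ≤ C + N * q := fun N => by
    have := hC (Set.mem_range_self N)
    simp only [birkhoffSum, sum_sub_distrib, sum_const, card_range, nsmul_eq_mul] at this ⊢
    linarith
  have hCN : ∀ᶠ N : ℕ in atTop, C / N < c - q :=
    (tendsto_const_div_atTop_nhds_zero_nat C).eventually (gt_mem_nhds (by linarith))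
  filter_upwards [hCN, eventually_gt_atTop 0] with N hN hN0
  have hNpos : (0 : ℝ) < N := by exact_mod_cast hN0
  calc birkhoffAverage ℝ f h N x = birkhoffSum f h N x / N := by
        rw [birkhoffAverage, smul_eq_mul, inv_mul_eq_div]
    _ ≤ (C + N * q) / N := by gcongr; exact hsum N
    _ = C / N + q := by field_simp
    _ < c := by linarith

theorem Ergodic.ae_tendsto_birkhoffAverage (hf : Ergodic f μ) (hi : Integrable h μ) :
    ∀ᵐ x ∂μ, Tendsto (fun N => birkhoffAverage ℝ f h N x) atTop (𝓝 (∫ x, h x ∂μ)) := by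
  set h' := hi.aestronglyMeasurable.mk h
  have hh' : Measurable h' := hi.aestronglyMeasurable.stronglyMeasurable_mk.measurable
  have hhh' : h =ᵐ[μ] h' := hi.aestronglyMeasurable.ae_eq_mk
  have hi' : Integrable h' μ := hi.congr hhh'
  have hsame : ∀ᵐ x ∂μ, ∀ N, birkhoffAverage ℝ f h N x = birkhoffAverage ℝ f h' N x :=
    ae_all_iff.2 fun N => hf.quasiMeasurePreserving.birkhoffAverage_ae_eq_of_ae_eq ℝ hhh' N
  have hupper := hf.ae_eventually_birkhoffAverage_lt hh' hi'
  have hlower := hf.ae_eventually_birkhoffAverage_lt hh'.neg hi'.neg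
  filter_upwards [hsame, hupper, hlower] with x hx hup hlow
  rw [integral_congr_ae hhh']
  simp only [hx]
  refine tendsto_order.2 ⟨fun c hc => ?_, hup⟩
  filter_upwards [hlow (-c) (by simp only [Pi.neg_apply, integral_neg]; linarith)] with N hN
  rw [birkhoffAverage_neg] at hN
  exact neg_lt_neg_iff.1 hN

end Birkhoff

theorem weighted_birkhoff_ergodic_theorem_general
    {X : Type*} [MeasurableSpace X] (μ : Measure X) [IsProbabilityMeasure μ]
    (f : X → X) (hf : Ergodic f μ)
    (g : X → ℝ) (hg : Integrable g μ)
    (w : ℝ → ℝ) (hw : ContinuousOn w (Set.Icc 0 1))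
    (hint : ∫ x in (0:ℝ)..1, w x = 1) :
    ∀ᵐ x ∂μ, Tendsto
      (fun N : ℕ =>
        (∑ n ∈ Finset.range N, w (n / N) * g (f^[n] x)) /
          (∑ n ∈ Finset.range N, w (n / N)))
      atTop (nhds (∫ y, g y ∂μ)) := by
  have hbirkhoff : ∀ {φ : X → ℝ}, Integrable φ μ → ∀ᵐ x ∂μ,
      Tendsto (fun N : ℕ => (∑ n ∈ range N, φ (f^[n] x)) / N) atTop (𝓝 (∫ y, φ y ∂μ)) :=
    fun hφ => (hf.ae_tendsto_birkhoffAverage hφ).mono fun x hx => by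
      simpa [birkhoffAverage, birkhoffSum, div_eq_inv_mul] using hx
  filter_upwards [hbirkhoff hg, hbirkhoff hg.abs] with x hx hx_abs
  have hnum := tendsto_sum_mul_div_of_tendsto hw hx hx_abs.isBoundedUnder_le
  have hden := hw.tendsto_sum_range_div
  rw [hint, one_mul] at hnum
  rw [hint] at hden
  have hratio := hnum.div hden one_ne_zero
  rw [div_one] at hratio
  refine hratio.congr' ?_
  filter_upwards [eventually_gt_atTop 0] with N hN
  exact div_div_div_cancel_right₀ (Nat.cast_ne_zero.2 hN.ne') _ _

/-- Weighted Birkhoff ergodic theorem: for an ergodic measure-preserving map `f` on a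
probability space, an integrable observable `g`, and a continuous nonnegative weight
`w` on `[0,1]` with unit integral that is not identically zero, the weighted Birkhoff
averages converge almost everywhere to the space average `∫ g dμ`. -/
theorem weighted_birkhoff_ergodic_theorem
    {X : Type*} [MeasurableSpace X] (μ : Measure X) [IsProbabilityMeasure μ]
    (f : X → X) (hf : Ergodic f μ)
    (g : X → ℝ) (hg : Integrable g μ)
    (w : ℝ → ℝ) (hw : ContinuousOn w (Set.Icc 0 1))
    (hw0 : ∀ x ∈ Set.Icc (0:ℝ) 1, 0 ≤ w x)
    (hint : ∫ x in (0:ℝ)..1, w x = 1)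
    (hne : ∃ x ∈ Set.Icc (0:ℝ) 1, w x ≠ 0) :
    ∀ᵐ x ∂μ, Tendsto
      (fun N : ℕ =>
        (∑ n ∈ Finset.range N, w (n / N) * g (f^[n] x)) /
          (∑ n ∈ Finset.range N, w (n / N)))
      atTop (nhds (∫ y, g y ∂μ)) :=
  weighted_birkhoff_ergodic_theorem_general μ f hf g hg w hw hint
end

section
/- Suppose the orbit of x under f is periodic with period p, i.e., f^p(x) = x, and g : X → ℝ is any function, and w : [0,1] → ℝ is a C¹ function with ∫₀¹ w = 1. Then the weighted Birkhoff average WB_N(g)(x) = (1/α_N) ∑_{n=0}^{N-1} w(n/N) g(fⁿ(x)) converges as N → ∞ to the periodic-orbit average (1/p) ∑_{k=0}^{p-1} g(f^k(x)). -/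
open Filter

/-!
Write `m` for the average of `g` over the period and `e n = g (fⁿ x) - m`. The partial sums of
`e` are `p`-periodic, hence bounded, so Abel summation against the Lipschitz weights `w (n / N)`
gives `∑_{n<N} w (n / N) e n = O(1)`. Together with the Riemann-sum estimate
`α_N / N = ∫₀¹ w + O(1 / N)`, both numerator and denominator divided by `N` converge, to `m` and
to `1`.
-/

open Finset Topology Interval

namespace Function.Periodic

theorem sum_range_periodic {β : Type*} [AddCommMonoid β] {e : ℕ → β} {p : ℕ}
    (he : Periodic e p) (hsum : ∑ k ∈ range p, e k = 0) :
    Periodic (fun N => ∑ n ∈ range N, e n) p := by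
  intro N
  induction N with
  | zero => simpa using hsum
  | succ N ih =>
    simp only [Nat.succ_add, sum_range_succ, he N] at ih ⊢
    rw [ih]

theorem exists_abs_le {S : ℕ → ℝ} {p : ℕ} (hS : Periodic S p) (hp : p ≠ 0) :
    ∃ C, ∀ n, |S n| ≤ C :=
  ⟨∑ k ∈ range p, |S k|, fun n => hS.map_mod_nat n ▸ single_le_sum (fun k _ => abs_nonneg (S k))
    (mem_range.2 (Nat.mod_lt n (Nat.pos_of_ne_zero hp)))⟩

end Function.Periodic

theorem abs_sum_range_mul_le {v a : ℕ → ℝ} {C : ℝ} (ha : ∀ n, |∑ i ∈ range n, a i| ≤ C)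
    (N : ℕ) :
    |∑ i ∈ range N, v i * a i| ≤
      C * (|v (N - 1)| + ∑ i ∈ range (N - 1), |v (i + 1) - v i|) := by
  have hparts := sum_range_by_parts v a N
  simp only [smul_eq_mul] at hparts
  rw [hparts]
  calc _ ≤ |v (N - 1) * ∑ i ∈ range N, a i|
        + |∑ i ∈ range (N - 1), (v (i + 1) - v i) * ∑ j ∈ range (i + 1), a j| := abs_sub _ _
    _ ≤ |v (N - 1)| * C + ∑ i ∈ range (N - 1), |v (i + 1) - v i| * C := by
        gcongr
        · rw [abs_mul]; gcongr; exact ha N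
        · refine (abs_sum_le_sum_abs _ _).trans (sum_le_sum fun i _ => ?_)
          rw [abs_mul]; gcongr; exact ha _
    _ = _ := by rw [← sum_mul]; ring

theorem natCast_div_mem_Icc_zero_one {n N : ℕ} (hn : n ≤ N) : (n / N : ℝ) ∈ Set.Icc 0 1 :=
  ⟨by positivity, div_le_one_of_le₀ (by exact_mod_cast hn) (Nat.cast_nonneg N)⟩

namespace LipschitzOnWith

variable {w : ℝ → ℝ} {K : NNReal}

theorem abs_integral_sub_mul_le {a b : ℝ} (hab : a ≤ b)
    (hw : LipschitzOnWith K w (Set.Icc a b)) :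
    |(∫ t in a..b, w t) - (b - a) * w a| ≤ K * (b - a) ^ 2 := by
  have hint : IntervalIntegrable w MeasureTheory.volume a b :=
    hw.continuousOn.intervalIntegrable_of_Icc hab
  have hdev : ∀ t ∈ Ι a b, ‖w t - w a‖ ≤ K * (b - a) := by
    intro t ht
    rw [Set.uIoc_of_le hab] at ht
    have hlip := hw.dist_le_mul t ⟨ht.1.le, ht.2⟩ a ⟨le_rfl, hab⟩
    rw [Real.dist_eq, Real.dist_eq, abs_of_nonneg (sub_nonneg.2 ht.1.le)] at hlip
    rw [Real.norm_eq_abs]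
    exact hlip.trans (by gcongr; linarith [ht.2])
  calc |(∫ t in a..b, w t) - (b - a) * w a| = ‖∫ t in a..b, (w t - w a)‖ := by
        rw [intervalIntegral.integral_sub hint intervalIntegrable_const,
          intervalIntegral.integral_const, smul_eq_mul, Real.norm_eq_abs]
    _ ≤ K * (b - a) * |b - a| := intervalIntegral.norm_integral_le_of_norm_le_const hdev
    _ = K * (b - a) ^ 2 := by rw [abs_of_nonneg (sub_nonneg.2 hab)]; ring

theorem abs_riemannSum_sub_integral_le (hw : LipschitzOnWith K w (Set.Icc 0 1)) {N : ℕ}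
    (hN : N ≠ 0) :
    |(∑ n ∈ range N, w (n / N)) / N - ∫ t in (0:ℝ)..1, w t| ≤ K / N := by
  have hNpos : (0:ℝ) < N := by positivity
  set x : ℕ → ℝ := fun n => n / N with hx
  have hstep : ∀ n, x n ≤ x (n + 1) := fun n => by simp only [hx]; gcongr; simp
  have hcell : ∀ n < N, Set.Icc (x n) (x (n + 1)) ⊆ Set.Icc 0 1 := fun n hn =>
    Set.Icc_subset_Icc (natCast_div_mem_Icc_zero_one hn.le).1 (natCast_div_mem_Icc_zero_one hn).2
  have hsplit : ∑ n ∈ range N, ∫ t in x n..x (n + 1), w t = ∫ t in (0:ℝ)..1, w t := by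
    rw [intervalIntegral.sum_integral_adjacent_intervals fun n hn =>
      (hw.continuousOn.mono (hcell n hn)).intervalIntegrable_of_Icc (hstep n)]
    simp [hx, hNpos.ne']
  have hwidth : ∀ n, x (n + 1) - x n = 1 / N := fun n => by simp only [hx]; push_cast; ring
  have hcell_err : ∀ n ∈ range N, |w (x n) / N - ∫ t in x n..x (n + 1), w t| ≤ K / N ^ 2 := by
    intro n hn
    have h := abs_integral_sub_mul_le (hstep n) (hw.mono (hcell n (mem_range.1 hn)))
    rw [hwidth, abs_sub_comm] at h
    convert h using 2 <;> ring
  calc |(∑ n ∈ range N, w (n / N)) / N - ∫ t in (0:ℝ)..1, w t|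
      = |∑ n ∈ range N, (w (x n) / N - ∫ t in x n..x (n + 1), w t)| := by
        rw [sum_sub_distrib, hsplit, sum_div]
    _ ≤ ∑ _n ∈ range N, (K : ℝ) / N ^ 2 := (abs_sum_le_sum_abs _ _).trans (sum_le_sum hcell_err)
    _ = K / N := by rw [sum_const, card_range, nsmul_eq_mul]; field_simp

theorem tendsto_riemannSum (hw : LipschitzOnWith K w (Set.Icc 0 1)) :
    Tendsto (fun N : ℕ => (∑ n ∈ range N, w (n / N)) / N) atTop (𝓝 (∫ t in (0:ℝ)..1, w t)) := by
  refine tendsto_iff_norm_sub_tendsto_zero.2 <|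
    squeeze_zero_norm' (a := fun N : ℕ => (K : ℝ) / N) ?_
      (tendsto_const_nhds.div_atTop tendsto_natCast_atTop_atTop)
  filter_upwards [eventually_ne_atTop 0] with N hN
  rw [Real.norm_eq_abs, abs_norm]
  exact abs_riemannSum_sub_integral_le hw hN

theorem tendsto_sum_mul_div_zero (hw : LipschitzOnWith K w (Set.Icc 0 1)) {a : ℕ → ℝ} {C : ℝ}
    (ha : ∀ n, |∑ i ∈ range n, a i| ≤ C) :
    Tendsto (fun N : ℕ => (∑ n ∈ range N, w (n / N) * a n) / N) atTop (𝓝 0) := by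
  have hsample : ∀ {N i j : ℕ}, i ≤ N → j ≤ N →
      |w (i / N) - w (j / N)| ≤ K * |(i / N - j / N : ℝ)| :=
    fun hi hj => by
      simpa only [Real.dist_eq] using
        hw.dist_le_mul _ (natCast_div_mem_Icc_zero_one hi) _ (natCast_div_mem_Icc_zero_one hj)
  have hbound : ∀ N : ℕ, N ≠ 0 →
      |∑ n ∈ range N, w (n / N) * a n| ≤ C * (|w 0| + K + K) := by
    intro N hN
    have hC : 0 ≤ C := (abs_nonneg _).trans (ha 0)
    refine (abs_sum_range_mul_le ha N).trans (mul_le_mul_of_nonneg_left ?_ hC)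
    have hlast : |w ((N - 1 : ℕ) / N)| ≤ |w 0| + K := by
      have hdist : |((N - 1 : ℕ) / N - (0 : ℕ) / N : ℝ)| ≤ 1 := by
        rw [Nat.cast_zero, zero_div, sub_zero, abs_of_nonneg (by positivity)]
        exact (natCast_div_mem_Icc_zero_one (N.sub_le 1)).2
      have h := (hsample (N.sub_le 1) (Nat.zero_le N)).trans
        (mul_le_of_le_one_right K.coe_nonneg hdist)
      rw [Nat.cast_zero, zero_div] at h
      linarith [abs_sub_abs_le_abs_sub (w ((N - 1 : ℕ) / N)) (w 0)]
    have hstep : ∀ i ∈ range (N - 1), |w ((i + 1 : ℕ) / N) - w (i / N)| ≤ K / N := by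
      intro i hi
      have hi := mem_range.1 hi
      have hdist : |((i + 1 : ℕ) / N - i / N : ℝ)| = 1 / N := by
        push_cast; rw [← sub_div, add_sub_cancel_left, abs_of_nonneg (by positivity)]
      have h := hsample (N := N) (i := i + 1) (j := i) (by omega) (by omega)
      rwa [hdist, ← div_eq_mul_one_div] at h
    have hvar : ∑ i ∈ range (N - 1), |w ((i + 1 : ℕ) / N) - w (i / N)| ≤ K :=
      calc _ ≤ ∑ _i ∈ range (N - 1), (K : ℝ) / N := sum_le_sum hstep
        _ = (N - 1 : ℕ) * (K / N) := by rw [sum_const, card_range, nsmul_eq_mul]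
        _ ≤ N * (K / N) := by gcongr; exact_mod_cast N.sub_le 1
        _ = K := by field_simp
    linarith
  refine squeeze_zero_norm' (a := fun N : ℕ => C * (|w 0| + K + K) / N) ?_
    (tendsto_const_nhds.div_atTop tendsto_natCast_atTop_atTop)
  filter_upwards [eventually_ne_atTop 0] with N hN
  rw [Real.norm_eq_abs, abs_div, Nat.abs_cast]
  exact div_le_div_of_nonneg_right (hbound N hN) (Nat.cast_nonneg N)

end LipschitzOnWith

theorem Function.Periodic.tendsto_sum_weight_mul_div {h : ℕ → ℝ} {p : ℕ} (hh : Periodic h p)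
    (hp : p ≠ 0) {w : ℝ → ℝ} {K : NNReal} (hw : LipschitzOnWith K w (Set.Icc 0 1)) :
    Tendsto (fun N : ℕ => (∑ n ∈ range N, w (n / N) * h n) / N) atTop
      (𝓝 ((∫ t in (0:ℝ)..1, w t) * ((1 / p) * ∑ k ∈ range p, h k))) := by
  set m := (1 / p) * ∑ k ∈ range p, h k
  have hdev : Periodic (fun n => h n - m) p := fun n => by simp only [hh n]
  have hdev_sum : ∑ k ∈ range p, (h k - m) = 0 := by
    have : (p : ℝ) ≠ 0 := Nat.cast_ne_zero.2 hp
    rw [sum_sub_distrib, sum_const, card_range, nsmul_eq_mul]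
    simp only [m]
    field_simp
    ring
  obtain ⟨C, hC⟩ := (hdev.sum_range_periodic hdev_sum).exists_abs_le hp
  have hlim := (hw.tendsto_riemannSum.mul_const m).add (hw.tendsto_sum_mul_div_zero hC)
  rw [add_zero] at hlim
  refine hlim.congr fun N => ?_
  simp only [mul_sub, sum_sub_distrib, ← sum_mul]
  ring

/-- If `x` has period `p` under `f`, then for a `C¹` weight `w` with `∫₀¹ w = 1`,
the weighted Birkhoff averages of any `g` along the orbit of `x` converge to the
average of `g` over one period. -/
theorem weighted_birkhoff_periodic
    {X : Type*} (f : X → X) (x : X) (p : ℕ) (hp : 1 ≤ p) (hper : f^[p] x = x)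
    (g : X → ℝ)
    (w : ℝ → ℝ) (hw : ContDiff ℝ 1 w)
    (hint : ∫ t in (0:ℝ)..1, w t = 1) :
    Tendsto
      (fun N : ℕ =>
        (∑ n ∈ Finset.range N, w (n / N) * g (f^[n] x)) /
          (∑ n ∈ Finset.range N, w (n / N)))
      atTop (nhds ((1 / p) * ∑ k ∈ Finset.range p, g (f^[k] x))) := by
  have horbit : Function.Periodic (fun n => g (f^[n] x)) p := fun n => by
    simp only [Function.iterate_add_apply, hper]
  obtain ⟨K, hK⟩ := hw.contDiffOn.exists_lipschitzOnWith one_ne_zero (convex_Icc 0 1) isCompact_Icc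
  have hnum := horbit.tendsto_sum_weight_mul_div (by omega) hK
  have hden := hK.tendsto_riemannSum
  rw [hint, one_mul] at hnum
  rw [hint] at hden
  have hratio := hnum.div hden one_ne_zero
  rw [div_one] at hratio
  refine hratio.congr' ?_
  filter_upwards [eventually_ne_atTop 0] with N hN
  exact div_div_div_cancel_right₀ (Nat.cast_ne_zero.2 hN) _ _
end
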